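/- arXiv:2302.08781 — 2 statements merged into one kernel-verified Lean document; each statement's English description precedes it below -/
import Mathlib

section
/- Let x₁,…,x_N and g₁,…,g_N be vectors in ℝ^d, let f₁,…,f_N be real numbers, and let μ, L be real numbers with −∞ < μ ≤ L < ∞. Let X = (x₁ ⋯ x_N) and G = (g₁ ⋯ g_N) be the d×N matrices whose columns are these vectors. There exists a real symmetric d×d matrix Q with μ·I ⪯ Q ⪯ L·I such that g_i = Q·x_i and f_i = (1/2)·x_iᵀ·Q·x_i for all i ∈ {1,…,N} if and only if: Xᵀ·G = Gᵀ·X, (G − μ·X)ᵀ·(L·X − G) ⪰ 0, and f_i = (1/2)·x_iᵀ·g_i for all i ∈ {1,…,N}. -/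
/-!
If `G = QX`, then `(G - μX)ᵀ(LX - G) = Xᵀ(Q - μI)(LI - Q)X`, and `(Q - μI)(LI - Q)` is positive
semidefinite as a product of commuting positive semidefinite matrices.

Conversely, the affine change `X ↦ (L - μ)X`, `G ↦ G - μX` reduces to `μ = 0`, `L = 1`, where the
hypothesis says `GᵀG ⪯ M := GᵀX`. If `P ⪰ 0` is a generalized inverse of `M` (`MPM = M`, `PMP = P`),
then `Q = GPGᵀ` interpolates: `GᵀG ⪯ M` gives `ker M ⊆ ker G`, hence `GPM = G`, i.e. `QX = G`; and
`Q - Q² = GP(M - GᵀG)PGᵀ ⪰ 0`, which for symmetric `Q` means `Q ⪯ I` since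
`I - Q = (I - Q)² + (Q - Q²)`.
-/

open Matrix
open scoped ComplexOrder MatrixOrder

namespace Matrix

section Columns

variable {R m n : Type*} [NonUnitalNonAssocSemiring R] [Fintype m]

lemma mul_eq_of_columns_iff {Q : Matrix m m R} {x g : n → m → R} :
    Q * of (fun i j => x j i) = of (fun i j => g j i) ↔ ∀ j, g j = Q *ᵥ x j := by
  simp only [← Matrix.ext_iff, funext_iff, mul_apply, of_apply, mulVec, dotProduct]
  exact ⟨fun h j i => (h i j).symm, fun h i j => (h j i).symm⟩

end Columns

variable {𝕜 m n : Type*} [RCLike 𝕜] [Fintype m] [Fintype n]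

lemma eq_zero_of_posSemidef_neg_conjTranspose_mul_self {A : Matrix m n 𝕜}
    (h : (-(Aᴴ * A)).PosSemidef) : A = 0 :=
  conjTranspose_mul_self_eq_zero.1 <|
    le_antisymm (by rwa [le_iff, zero_sub]) (posSemidef_conjTranspose_mul_self A).nonneg

lemma posSemidef_one_sub_of_posSemidef_sub_conjTranspose_mul_self [DecidableEq n]
    {Q : Matrix n n 𝕜} (h : (Q - Qᴴ * Q).PosSemidef) : (1 - Q).PosSemidef := by
  have hQ : Qᴴ = Q := by
    simpa [conjTranspose_sub, conjTranspose_mul] using h.1.eq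
  have hsum : 1 - Q = (1 - Q)ᴴ * (1 - Q) + (Q - Qᴴ * Q) := by
    rw [conjTranspose_sub, conjTranspose_one, hQ]
    noncomm_ring
  rw [hsum]
  exact (posSemidef_conjTranspose_mul_self _).add h

variable [DecidableEq n]

lemma PosSemidef.mul_of_commute {A B : Matrix n n 𝕜} (hA : A.PosSemidef) (hB : B.PosSemidef)
    (h : Commute A B) : (A * B).PosSemidef :=
  (h.mul_nonneg hA.nonneg hB.nonneg).posSemidef

lemma PosSemidef.exists_generalizedInverse {M : Matrix n n 𝕜} (hM : M.PosSemidef) :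
    ∃ P : Matrix n n 𝕜, P.PosSemidef ∧ M * P * M = M ∧ P * M * P = P := by
  -- `P = M⁺`: invert the eigenvalues of `M`, with the convention `0⁻¹ = 0`.
  have hinv : ContinuousOn (·⁻¹ : ℝ → ℝ) (spectrum ℝ M) := M.finite_real_spectrum.continuousOn _
  have hM' : IsSelfAdjoint M := hM.1
  refine ⟨cfc (·⁻¹ : ℝ → ℝ) M, ?_, ?_, ?_⟩
  · exact (cfc_nonneg fun x hx => inv_nonneg.2 (spectrum_nonneg_of_nonneg hM.nonneg hx)).posSemidef
  · calc M * cfc (·⁻¹) M * M = cfc (fun x : ℝ => x * x⁻¹ * x) M := by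
          rw [cfc_mul _ _ M, cfc_mul _ _ M, cfc_id' ℝ M]
      _ = M := by simp only [mul_inv_mul_cancel, cfc_id' ℝ M]
  · calc cfc (·⁻¹) M * M * cfc (·⁻¹) M = cfc (fun x : ℝ => x⁻¹ * x * x⁻¹) M := by
          rw [cfc_mul _ _ M, cfc_mul _ _ M, cfc_id' ℝ M]
      _ = cfc (·⁻¹) M := by
          simpa only [inv_inv] using congrArg (cfc · M) (funext fun x : ℝ => mul_inv_mul_cancel x⁻¹)

lemma posSemidef_conjTranspose_sub_smul_mul_smul_sub {Q : Matrix n n 𝕜} {μ L : ℝ}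
    (hμ : (Q - μ • 1).PosSemidef) (hL : (L • 1 - Q).PosSemidef) (X : Matrix n m 𝕜) :
    ((Q * X - μ • X)ᴴ * (L • X - Q * X)).PosSemidef := by
  have hcomm : Commute (Q - μ • 1) (L • 1 - Q) :=
    ((Commute.one_right _).smul_right L).sub_right
      ((Commute.refl Q).sub_left ((Commute.one_left Q).smul_left μ))
  have hμX : Q * X - μ • X = (Q - μ • 1) * X := by
    rw [Matrix.sub_mul, Matrix.smul_mul, Matrix.one_mul]
  have hLX : L • X - Q * X = (L • 1 - Q) * X := by
    rw [Matrix.sub_mul, Matrix.smul_mul, Matrix.one_mul]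
  rw [hμX, hLX, conjTranspose_mul, hμ.1.eq]
  simpa only [Matrix.mul_assoc] using (hμ.mul_of_commute hL hcomm).conjTranspose_mul_mul_same X

variable [DecidableEq m]

theorem exists_zero_le_le_one_mul_eq {X G : Matrix m n 𝕜} (h : (Gᴴ * (X - G)).PosSemidef) :
    ∃ Q : Matrix m m 𝕜, Q.PosSemidef ∧ (1 - Q).PosSemidef ∧ Q * X = G := by
  set M := Gᴴ * X
  have hM : M.PosSemidef := by
    simpa only [Matrix.mul_sub, sub_add_cancel] using h.add (posSemidef_conjTranspose_mul_self G)
  obtain ⟨P, hP, hMPM, hPMP⟩ := hM.exists_generalizedInverse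
  -- `1 - P M` maps into `ker M`, which `Gᴴ G ⪯ M` forces into `ker G`.
  have hGPM : G * P * M = G := by
    have hMZ : M * (1 - P * M) = 0 := by
      rw [Matrix.mul_sub, Matrix.mul_one, ← Matrix.mul_assoc, hMPM, sub_self]
    have hGZ : G * (1 - P * M) = 0 := by
      have hquad : (1 - P * M)ᴴ * (Gᴴ * (X - G)) * (1 - P * M)
          = (1 - P * M)ᴴ * (M * (1 - P * M)) - (G * (1 - P * M))ᴴ * (G * (1 - P * M)) := by
        rw [conjTranspose_mul]
        simp only [M, Matrix.mul_sub, Matrix.sub_mul, Matrix.mul_assoc]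
        abel
      rw [hMZ, Matrix.mul_zero, zero_sub] at hquad
      exact eq_zero_of_posSemidef_neg_conjTranspose_mul_self
        (hquad ▸ h.conjTranspose_mul_mul_same (1 - P * M))
    rwa [Matrix.mul_sub, Matrix.mul_one, sub_eq_zero, eq_comm, ← Matrix.mul_assoc] at hGZ
  refine ⟨G * P * Gᴴ, hP.mul_mul_conjTranspose_same G,
    posSemidef_one_sub_of_posSemidef_sub_conjTranspose_mul_self ?_, by rw [Matrix.mul_assoc, hGPM]⟩
  have hsq : G * P * Gᴴ - (G * P * Gᴴ)ᴴ * (G * P * Gᴴ)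
      = (P * Gᴴ)ᴴ * (Gᴴ * (X - G)) * (P * Gᴴ) := by
    simp only [conjTranspose_mul, conjTranspose_conjTranspose, hP.1.eq]
    nth_rw 1 [← hPMP]
    simp only [M, Matrix.mul_sub, Matrix.sub_mul, Matrix.mul_assoc]
  rw [hsq]
  exact h.conjTranspose_mul_mul_same _

theorem exists_smul_one_le_le_smul_one_mul_eq {μ L : ℝ} (hμL : μ ≤ L) {X G : Matrix m n 𝕜}
    (h : ((G - μ • X)ᴴ * (L • X - G)).PosSemidef) :
    ∃ Q : Matrix m m 𝕜, (Q - μ • 1).PosSemidef ∧ (L • 1 - Q).PosSemidef ∧ Q * X = G := by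
  have hshift : L • X - G = (L - μ) • X - (G - μ • X) := by module
  rw [hshift] at h
  obtain ⟨Q, hQ, hQ1, hQX⟩ := exists_zero_le_le_one_mul_eq h
  refine ⟨μ • 1 + (L - μ) • Q, ?_, ?_, ?_⟩
  · simpa using hQ.smul (sub_nonneg.2 hμL)
  · convert hQ1.smul (sub_nonneg.2 hμL) using 1
    module
  · rw [Matrix.add_mul, Matrix.smul_mul, Matrix.one_mul, Matrix.smul_mul, ← Matrix.mul_smul, hQX]
    abel

end Matrix

/-- Interpolation conditions for homogeneous quadratic functions (Theorem 3.7):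
the triples `(xᵢ, gᵢ, fᵢ)` are interpolable by a quadratic `x ↦ ½ xᵀQx` with `Q`
symmetric and `μI ⪯ Q ⪯ LI` if and only if `XᵀG = GᵀX`,
`(G − μX)ᵀ(LX − G) ⪰ 0`, and `fᵢ = ½ xᵢᵀgᵢ` for all `i`. -/
theorem quadratic_interpolation
    (d N : ℕ) (μ L : ℝ) (hμL : μ ≤ L)
    (x g : Fin N → (Fin d → ℝ)) (f : Fin N → ℝ)
    (X G : Matrix (Fin d) (Fin N) ℝ)
    (hX : X = Matrix.of fun i j => x j i)
    (hG : G = Matrix.of fun i j => g j i) :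
    (∃ Q : Matrix (Fin d) (Fin d) ℝ,
        Qᵀ = Q ∧
        (Q - μ • (1 : Matrix (Fin d) (Fin d) ℝ)).PosSemidef ∧
        (L • (1 : Matrix (Fin d) (Fin d) ℝ) - Q).PosSemidef ∧
        ∀ i : Fin N, g i = Q.mulVec (x i) ∧
          f i = (1 / 2) * (x i ⬝ᵥ Q.mulVec (x i))) ↔
      (Xᵀ * G = Gᵀ * X ∧
        ((G - μ • X)ᵀ * (L • X - G)).PosSemidef ∧
        ∀ i : Fin N, f i = (1 / 2) * (x i ⬝ᵥ g i)) := by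
  subst hX hG
  simp only [← conjTranspose_eq_transpose_of_trivial]
  constructor
  · rintro ⟨Q, hQ, hμ, hL, hQx⟩
    have hQX := mul_eq_of_columns_iff.2 fun i => (hQx i).1
    refine ⟨by rw [← hQX, conjTranspose_mul, hQ, Matrix.mul_assoc], ?_,
      fun i => by rw [(hQx i).2, ← (hQx i).1]⟩
    rw [← hQX]
    exact posSemidef_conjTranspose_sub_smul_mul_smul_sub hμ hL _
  · rintro ⟨-, h, hf⟩
    obtain ⟨Q, hμ, hL, hQX⟩ := exists_smul_one_le_le_smul_one_mul_eq hμL h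
    have hQx := mul_eq_of_columns_iff.1 hQX
    refine ⟨Q, ?_, hμ, hL, fun i => ⟨hQx i, by rw [hf i, hQx i]⟩⟩
    have := hμ.1.eq
    rwa [conjTranspose_sub, conjTranspose_smul, conjTranspose_one, star_trivial,
      sub_left_inj] at this
end

section
/- Let M₁ be a real p×q matrix, M₂ a real p×r matrix, M₃ a real s×q matrix, and L ≥ 0. There exists a real s×r matrix W such that the (p+s)×(q+r) block matrix [[M₁, M₂],[M₃, W]] satisfies σ_max([[M₁, M₂],[M₃, W]]) ≤ L if and only if σ_max([M₁ M₂]) ≤ L and σ_max([M₁; M₃]) ≤ L, where [M₁ M₂] denotes the horizontal concatenation and [M₁; M₃] the vertical concatenation. Moreover, if p = s, q = r, M₁ is symmetric and M₂ = M₃ᵀ, then W can be chosen symmetric; and if M₁ is skew-symmetric and M₂ = −M₃ᵀ, then W can be chosen skew-symmetric. -/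
/-!
Throughout, `‖A‖ ≤ √c` is expressed as `Aᵀ * A ≤ c • 1` in the Loewner order (`MatrixOrder`).

The two conditions are necessary because `[M₁ M₂]` and `[M₁; M₃]` are a row block and a column
block of the completed matrix. Conversely (Davis–Kahan–Weinberger), put `D = (c - M₁ᵀM₁)^{1/2}`
and `D' = (c - M₁M₁ᵀ)^{1/2}`. The column condition reads `M₃ᵀM₃ ≤ D²`, so Douglas' lemma gives
`M₃ = Z D` with `‖Z‖ ≤ 1`; dually the row condition gives `M₂ = D' Y` with `‖Y‖ ≤ 1`. Since
`M₁ᵀ D' = D M₁ᵀ`, the Julia matrix `J = [[M₁, D'], [D, -M₁ᵀ]]` satisfies `JᵀJ = c`, hence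
`diag(1, Z) J diag(1, Y) = [[M₁, M₂], [M₃, -Z M₁ᵀ Y]]` has norm at most `√c`. If `M₁` is
symmetric or skew-symmetric then `D' = D`, so `Y = ±Zᵀ` and `-Z M₁ᵀ Y` inherits the symmetry.
-/

open Matrix Polynomial
open scoped MatrixOrder

lemma Set.Finite.exists_polynomial_eqOn {F : Type*} [Field F] {s : Set F} (hs : s.Finite)
    (f : F → F) : ∃ q : F[X], Set.EqOn (fun x => q.eval x) f s := by
  classical
  refine ⟨Lagrange.interpolate hs.toFinset id f, fun x hx => ?_⟩
  exact Lagrange.eval_interpolate_at_node f (Set.injOn_id _) (hs.mem_toFinset.mpr hx)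

namespace Matrix

variable {k l m n : Type*} [Fintype k] [Fintype l] [Fintype m] [Fintype n]

section Contractions

lemma transpose_mul_mul_le_transpose_mul_mul {A B : Matrix n n ℝ} (h : A ≤ B)
    (X : Matrix n m ℝ) : Xᵀ * A * X ≤ Xᵀ * B * X := by
  have := (le_iff.mp h).conjTranspose_mul_mul_same X
  rwa [conjTranspose_eq_transpose_of_trivial, Matrix.mul_sub, Matrix.sub_mul] at this

lemma transpose_mul_self_nonneg (A : Matrix m n ℝ) : 0 ≤ Aᵀ * A := by
  simpa [conjTranspose_eq_transpose_of_trivial] using (posSemidef_conjTranspose_mul_self A).nonneg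

omit [Fintype n] in
lemma transpose_eq_self_of_isSelfAdjoint {S : Matrix n n ℝ} (hS : IsSelfAdjoint S) : Sᵀ = S := by
  rw [← conjTranspose_eq_transpose_of_trivial]; exact hS

lemma transpose_mul_self_le_smul_one_iff_dotProduct [DecidableEq n] {c : ℝ}
    {A : Matrix m n ℝ} : Aᵀ * A ≤ c • 1 ↔ ∀ x, (A *ᵥ x) ⬝ᵥ (A *ᵥ x) ≤ c * (x ⬝ᵥ x) := by
  have hquad (x : n → ℝ) :
      star x ⬝ᵥ ((c • 1 - Aᵀ * A) *ᵥ x) = c * (x ⬝ᵥ x) - (A *ᵥ x) ⬝ᵥ (A *ᵥ x) := by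
    rw [star_trivial, sub_mulVec, dotProduct_sub, smul_mulVec, one_mulVec, dotProduct_smul,
      smul_eq_mul, ← mulVec_mulVec, dotProduct_mulVec, vecMul_transpose]
  have hsymm : (c • 1 - Aᵀ * A).IsHermitian := by
    simp [IsHermitian, conjTranspose_eq_transpose_of_trivial, transpose_sub, transpose_smul]
  rw [le_iff, posSemidef_iff_dotProduct_mulVec]
  simp only [hsymm, true_and, hquad, sub_nonneg]

lemma dotProduct_sq_le (x y : n → ℝ) : (x ⬝ᵥ y) ^ 2 ≤ (x ⬝ᵥ x) * (y ⬝ᵥ y) := by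
  simpa [dotProduct, sq] using Finset.sum_mul_sq_le_sq_mul_sq Finset.univ x y

/-- For `v = Aᵀ y`, Cauchy–Schwarz gives `‖v‖⁴ = ⟨y, A v⟩² ≤ ‖y‖² ‖A v‖² ≤ c ‖y‖² ‖v‖²`. -/
lemma mul_transpose_le_smul_one [DecidableEq m] [DecidableEq n] {c : ℝ} (hc : 0 ≤ c)
    {A : Matrix m n ℝ} (h : Aᵀ * A ≤ c • 1) : A * Aᵀ ≤ c • 1 := by
  rw [transpose_mul_self_le_smul_one_iff_dotProduct] at h
  suffices Aᵀᵀ * Aᵀ ≤ c • 1 by rwa [transpose_transpose] at this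
  rw [transpose_mul_self_le_smul_one_iff_dotProduct]
  intro y
  set v := Aᵀ *ᵥ y
  have hv : v ⬝ᵥ v = y ⬝ᵥ (A *ᵥ v) := by
    rw [dotProduct_mulVec, ← mulVec_transpose, transpose_transpose, dotProduct_comm]
  have key : (v ⬝ᵥ v) * (v ⬝ᵥ v) ≤ (c * (y ⬝ᵥ y)) * (v ⬝ᵥ v) := calc
    (v ⬝ᵥ v) * (v ⬝ᵥ v) = (y ⬝ᵥ (A *ᵥ v)) ^ 2 := by rw [hv, sq]
    _ ≤ (y ⬝ᵥ y) * ((A *ᵥ v) ⬝ᵥ (A *ᵥ v)) := dotProduct_sq_le _ _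
    _ ≤ (y ⬝ᵥ y) * (c * (v ⬝ᵥ v)) :=
      mul_le_mul_of_nonneg_left (h v) (dotProduct_self_star_nonneg y)
    _ = (c * (y ⬝ᵥ y)) * (v ⬝ᵥ v) := by ring
  have hy : 0 ≤ c * (y ⬝ᵥ y) := mul_nonneg hc (dotProduct_self_star_nonneg y)
  nlinarith

lemma transpose_mul_self_le_smul_one_iff_mul_transpose [DecidableEq m] [DecidableEq n] {c : ℝ}
    (hc : 0 ≤ c) {A : Matrix m n ℝ} : Aᵀ * A ≤ c • 1 ↔ A * Aᵀ ≤ c • 1 :=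
  ⟨mul_transpose_le_smul_one hc, fun h => by
    simpa using mul_transpose_le_smul_one hc (A := Aᵀ) (by simpa using h)⟩

lemma mul_transpose_le_one [DecidableEq m] [DecidableEq n] {A : Matrix m n ℝ}
    (h : Aᵀ * A ≤ 1) : A * Aᵀ ≤ 1 := by
  simpa using mul_transpose_le_smul_one zero_le_one (c := 1) (by simpa using h)

lemma transpose_mul_self_le_of_fromRows [DecidableEq n] {c : ℝ} {A : Matrix m n ℝ}
    {B : Matrix k n ℝ} (h : (fromRows A B)ᵀ * fromRows A B ≤ c • 1) : Aᵀ * A ≤ c • 1 := by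
  rw [transpose_fromRows, fromCols_mul_fromRows] at h
  exact le_trans (le_add_of_nonneg_right (transpose_mul_self_nonneg B)) h

lemma transpose_mul_self_le_of_fromCols [DecidableEq m] [DecidableEq n] [DecidableEq k] {c : ℝ}
    (hc : 0 ≤ c) {A : Matrix m n ℝ} {B : Matrix m k ℝ}
    (h : (fromCols A B)ᵀ * fromCols A B ≤ c • 1) : Aᵀ * A ≤ c • 1 := by
  rw [transpose_mul_self_le_smul_one_iff_mul_transpose hc] at h ⊢
  simpa using transpose_mul_self_le_of_fromRows (A := Aᵀ) (B := Bᵀ)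
    (by rwa [transpose_fromRows, transpose_transpose, transpose_transpose, ← transpose_fromCols])

lemma transpose_mul_self_mul_mul_le [DecidableEq m] [DecidableEq n] [DecidableEq l] {c : ℝ}
    (hc : 0 ≤ c) {D : Matrix k m ℝ} {U : Matrix m n ℝ} {E : Matrix n l ℝ} (hD : Dᵀ * D ≤ 1)
    (hU : Uᵀ * U = c • 1) (hE : Eᵀ * E ≤ 1) : (D * U * E)ᵀ * (D * U * E) ≤ c • 1 := calc
  (D * U * E)ᵀ * (D * U * E) = (U * E)ᵀ * (Dᵀ * D) * (U * E) := by
    simp only [transpose_mul, Matrix.mul_assoc]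
  _ ≤ (U * E)ᵀ * 1 * (U * E) := transpose_mul_mul_le_transpose_mul_mul hD _
  _ = c • (Eᵀ * E) := by
    rw [Matrix.mul_one, transpose_mul, Matrix.mul_assoc, ← Matrix.mul_assoc Uᵀ, hU,
      Matrix.smul_mul, Matrix.one_mul, Matrix.mul_smul]
  _ ≤ c • 1 := smul_le_smul_of_nonneg_left hE hc

lemma transpose_mul_self_fromBlocks_one_le_one [DecidableEq m] [DecidableEq n] {Z : Matrix k n ℝ}
    (hZ : Zᵀ * Z ≤ 1) :
    (fromBlocks (1 : Matrix m m ℝ) 0 0 Z)ᵀ * fromBlocks (1 : Matrix m m ℝ) 0 0 Z ≤ 1 := by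
  set R : Matrix n (m ⊕ n) ℝ := fromCols 0 1
  have hR (P : Matrix n n ℝ) : Rᵀ * P * R = fromBlocks 0 0 0 P := by
    simp [R, transpose_fromCols, ← fromCols_fromRows_eq_fromBlocks]
  calc (fromBlocks (1 : Matrix m m ℝ) 0 0 Z)ᵀ * fromBlocks (1 : Matrix m m ℝ) 0 0 Z
      = fromBlocks 1 0 0 0 + Rᵀ * (Zᵀ * Z) * R := by
        rw [hR, fromBlocks_add, fromBlocks_transpose, fromBlocks_multiply]; simp
    _ ≤ fromBlocks 1 0 0 0 + Rᵀ * (1 : Matrix n n ℝ) * R := by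
        gcongr; exact transpose_mul_mul_le_transpose_mul_mul hZ R
    _ = 1 := by rw [hR, fromBlocks_add, ← fromBlocks_one]; simp

end Contractions

section Douglas

lemma mul_eq_zero_of_transpose_mul_self_le {C : Matrix m n ℝ} {S : Matrix k n ℝ}
    (h : Cᵀ * C ≤ Sᵀ * S) {Q : Matrix n l ℝ} (hQ : S * Q = 0) : C * Q = 0 := by
  have hle : (C * Q)ᵀ * (C * Q) ≤ 0 := calc
    (C * Q)ᵀ * (C * Q) = Qᵀ * (Cᵀ * C) * Q := by simp only [transpose_mul, Matrix.mul_assoc]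
    _ ≤ Qᵀ * (Sᵀ * S) * Q := transpose_mul_mul_le_transpose_mul_mul h Q
    _ = (S * Q)ᵀ * (S * Q) := by simp only [transpose_mul, Matrix.mul_assoc]
    _ = 0 := by rw [hQ, Matrix.mul_zero]
  rw [← conjTranspose_mul_self_eq_zero, conjTranspose_eq_transpose_of_trivial]
  exact le_antisymm hle (transpose_mul_self_nonneg _)

/-- Douglas' lemma. Take `Z = C S⁺` with the pseudo-inverse `S⁺ = cfc (·⁻¹) S` (using `0⁻¹ = 0`):
`C` vanishes on the range of `1 - S⁺ S`, which is the kernel of `S`. -/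
lemma exists_eq_mul_of_transpose_mul_self_le [DecidableEq n] {S : Matrix n n ℝ}
    (hS : IsSelfAdjoint S) {C : Matrix m n ℝ} (h : Cᵀ * C ≤ S * S) :
    ∃ Z : Matrix m n ℝ, Zᵀ * Z ≤ 1 ∧ C = Z * S := by
  have hcont (f : ℝ → ℝ) : ContinuousOn f (spectrum ℝ S) := finite_real_spectrum.continuousOn f
  have hcfc (f g : ℝ → ℝ) : cfc (fun x => f x * g x) S = cfc f S * cfc g S :=
    cfc_mul f g S (hcont f) (hcont g)
  have hS' : cfc (fun x => x) S = S := cfc_id' ℝ S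
  have hSGS : S * cfc (fun x : ℝ => x⁻¹) S * S = S := calc
    _ = cfc (fun x : ℝ => x * x⁻¹ * x) S := by rw [hcfc, hcfc, hS']
    _ = S := by simp only [mul_inv_mul_cancel, hS']
  have hbound : cfc (fun x : ℝ => x⁻¹) S * (S * S) * cfc (fun x : ℝ => x⁻¹) S ≤ 1 := calc
    _ = cfc (fun x : ℝ => x⁻¹ * (x * x) * x⁻¹) S := by rw [hcfc, hcfc, hcfc, hS']
    _ ≤ cfc (fun _ => 1) S :=
      cfc_mono (fun x _ => by by_cases hx : x = 0 <;> simp [hx]) (hcont _) (hcont _)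
    _ = 1 := cfc_const_one ℝ S
  set G := cfc (fun x : ℝ => x⁻¹) S
  have hSt := transpose_eq_self_of_isSelfAdjoint hS
  have hCG : C * (1 - G * S) = 0 := mul_eq_zero_of_transpose_mul_self_le (by rwa [hSt])
    (by rw [Matrix.mul_sub, Matrix.mul_one, ← Matrix.mul_assoc, hSGS, sub_self])
  refine ⟨C * G, ?_, ?_⟩
  · calc (C * G)ᵀ * (C * G) = Gᵀ * (Cᵀ * C) * G := by simp only [transpose_mul, Matrix.mul_assoc]
      _ ≤ Gᵀ * (S * S) * G := transpose_mul_mul_le_transpose_mul_mul h G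
      _ ≤ 1 := by rwa [transpose_eq_self_of_isSelfAdjoint IsSelfAdjoint.cfc]
  · rw [Matrix.mul_sub, Matrix.mul_one, sub_eq_zero] at hCG
    rw [Matrix.mul_assoc]; exact hCG

end Douglas

section Intertwining

lemma mul_pow_eq_pow_mul {R : Type*} [Semiring R] [DecidableEq m] [DecidableEq n]
    {A : Matrix n n R} {B : Matrix m m R} {X : Matrix m n R}
    (h : X * A = B * X) (j : ℕ) : X * A ^ j = B ^ j * X := by
  induction j with
  | zero => simp
  | succ j ih => rw [pow_succ, pow_succ, ← Matrix.mul_assoc, ih, Matrix.mul_assoc, h,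
      Matrix.mul_assoc]

lemma mul_aeval_eq_aeval_mul {R : Type*} [CommSemiring R] [DecidableEq m] [DecidableEq n]
    {A : Matrix n n R} {B : Matrix m m R} {X : Matrix m n R}
    (h : X * A = B * X) (q : R[X]) : X * aeval A q = aeval B q * X := by
  induction q using Polynomial.induction_on' with
  | add p q hp hq => rw [map_add, map_add, Matrix.mul_add, Matrix.add_mul, hp, hq]
  | monomial j a =>
    rw [aeval_monomial, aeval_monomial, ← Algebra.smul_def, ← Algebra.smul_def, Matrix.mul_smul,
      Matrix.smul_mul, mul_pow_eq_pow_mul h]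

lemma mul_cfc_eq_cfc_mul [DecidableEq m] [DecidableEq n]
    {A : Matrix n n ℝ} {B : Matrix m m ℝ} (hA : IsSelfAdjoint A) (hB : IsSelfAdjoint B)
    {X : Matrix m n ℝ} (h : X * A = B * X) (f : ℝ → ℝ) : X * cfc f A = cfc f B * X := by
  obtain ⟨q, hq⟩ := ((finite_real_spectrum (A := A)).union
    (finite_real_spectrum (A := B))).exists_polynomial_eqOn f
  rw [← cfc_congr (hq.mono Set.subset_union_left), ← cfc_congr (hq.mono Set.subset_union_right),
    cfc_polynomial q A, cfc_polynomial q B, mul_aeval_eq_aeval_mul h]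

end Intertwining

section Julia

/-- The defect `(c - MᵀM)^{1/2}` of `M`; it is junk (`0`) unless `MᵀM ≤ c`. -/
noncomputable def defect [DecidableEq n] (c : ℝ) (M : Matrix m n ℝ) : Matrix n n ℝ :=
  CFC.sqrt (c • 1 - Mᵀ * M)

variable [DecidableEq n] {c : ℝ} {M : Matrix m n ℝ}

lemma isSelfAdjoint_defect : IsSelfAdjoint (defect c M) :=
  (CFC.sqrt_nonneg _).isSelfAdjoint

lemma transpose_defect : (defect c M)ᵀ = defect c M :=
  transpose_eq_self_of_isSelfAdjoint isSelfAdjoint_defect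

lemma defect_mul_self (h : Mᵀ * M ≤ c • 1) : defect c M * defect c M = c • 1 - Mᵀ * M :=
  CFC.sqrt_mul_sqrt_self _ (sub_nonneg.mpr h)

@[simp]
lemma defect_neg : defect c (-M) = defect c M := by
  simp [defect]

lemma defect_eq_cfc (h : Mᵀ * M ≤ c • 1) : defect c M = cfc Real.sqrt (c • 1 - Mᵀ * M) := by
  rw [defect, CFC.sqrt_eq_real_sqrt _ (sub_nonneg.mpr h), cfcₙ_eq_cfc]

lemma transpose_mul_defect_transpose [DecidableEq m] (hc : 0 ≤ c) (h : Mᵀ * M ≤ c • 1) :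
    Mᵀ * defect c Mᵀ = defect c M * Mᵀ := by
  have h' : Mᵀᵀ * Mᵀ ≤ c • 1 := by
    rwa [transpose_transpose, ← transpose_mul_self_le_smul_one_iff_mul_transpose hc]
  rw [defect_eq_cfc h, defect_eq_cfc h']
  refine mul_cfc_eq_cfc_mul (sub_nonneg.mpr h').isSelfAdjoint (sub_nonneg.mpr h).isSelfAdjoint ?_ _
  simp only [transpose_transpose, Matrix.mul_sub, Matrix.sub_mul, Matrix.mul_smul,
    Matrix.smul_mul, Matrix.mul_one, Matrix.one_mul, Matrix.mul_assoc]

/-- Halmos' Julia operator of `M`. -/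
noncomputable def julia [DecidableEq m] (c : ℝ) (M : Matrix m n ℝ) : Matrix (m ⊕ n) (n ⊕ m) ℝ :=
  fromBlocks M (defect c Mᵀ) (defect c M) (-Mᵀ)

lemma transpose_mul_self_julia [DecidableEq m] (hc : 0 ≤ c) (h : Mᵀ * M ≤ c • 1) :
    (julia c M)ᵀ * julia c M = c • 1 := by
  have h' : Mᵀᵀ * Mᵀ ≤ c • 1 := by
    rwa [transpose_transpose, ← transpose_mul_self_le_smul_one_iff_mul_transpose hc]
  have hint := transpose_mul_defect_transpose hc h
  have hint' : defect c Mᵀ * M = M * defect c M := by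
    simpa [transpose_defect] using congrArg transpose hint
  rw [julia, fromBlocks_transpose, fromBlocks_multiply, transpose_defect, transpose_defect,
    defect_mul_self h, defect_mul_self h', hint, hint', ← fromBlocks_one, fromBlocks_smul]
  congr 1 <;> simp

end Julia

section Completion

variable {c : ℝ}

lemma transpose_mul_self_fromBlocks_defect_le [DecidableEq l] [DecidableEq m] [DecidableEq n]
    (hc : 0 ≤ c) {M : Matrix m n ℝ} (h : Mᵀ * M ≤ c • 1) {Z : Matrix k n ℝ}
    {Y : Matrix m l ℝ} (hZ : Zᵀ * Z ≤ 1) (hY : Yᵀ * Y ≤ 1) :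
    (fromBlocks M (defect c Mᵀ * Y) (Z * defect c M) (-(Z * Mᵀ * Y)))ᵀ *
      fromBlocks M (defect c Mᵀ * Y) (Z * defect c M) (-(Z * Mᵀ * Y)) ≤ c • 1 := by
  have hfactor : fromBlocks M (defect c Mᵀ * Y) (Z * defect c M) (-(Z * Mᵀ * Y)) =
      fromBlocks (1 : Matrix m m ℝ) 0 0 Z * julia c M * fromBlocks (1 : Matrix n n ℝ) 0 0 Y := by
    simp [julia, fromBlocks_multiply, Matrix.mul_assoc]
  rw [hfactor]
  exact transpose_mul_self_mul_mul_le hc (transpose_mul_self_fromBlocks_one_le_one hZ)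
    (transpose_mul_self_julia hc h) (transpose_mul_self_fromBlocks_one_le_one hY)

lemma exists_eq_mul_defect_of_fromRows [DecidableEq n] {M₁ : Matrix m n ℝ} {M₃ : Matrix k n ℝ}
    (h : (fromRows M₁ M₃)ᵀ * fromRows M₁ M₃ ≤ c • 1) :
    ∃ Z : Matrix k n ℝ, Zᵀ * Z ≤ 1 ∧ M₃ = Z * defect c M₁ := by
  refine exists_eq_mul_of_transpose_mul_self_le isSelfAdjoint_defect ?_
  rw [defect_mul_self (transpose_mul_self_le_of_fromRows h), le_sub_iff_add_le']
  rwa [transpose_fromRows, fromCols_mul_fromRows] at h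

lemma exists_eq_defect_mul_of_fromCols [DecidableEq l] [DecidableEq m] [DecidableEq n]
    (hc : 0 ≤ c) {M₁ : Matrix m n ℝ} {M₂ : Matrix m l ℝ}
    (h : (fromCols M₁ M₂)ᵀ * fromCols M₁ M₂ ≤ c • 1) :
    ∃ Y : Matrix m l ℝ, Yᵀ * Y ≤ 1 ∧ M₂ = defect c M₁ᵀ * Y := by
  have h' : (fromRows M₁ᵀ M₂ᵀ)ᵀ * fromRows M₁ᵀ M₂ᵀ ≤ c • 1 := by
    rw [← transpose_fromCols, transpose_transpose]
    exact (transpose_mul_self_le_smul_one_iff_mul_transpose hc).mp h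
  obtain ⟨Z, hZ, hM₂⟩ := exists_eq_mul_defect_of_fromRows h'
  refine ⟨Zᵀ, by simpa using mul_transpose_le_one hZ, ?_⟩
  rw [← transpose_transpose M₂, hM₂, transpose_mul, transpose_defect]

theorem exists_completion_iff [DecidableEq k] [DecidableEq l] [DecidableEq m] [DecidableEq n]
    (hc : 0 ≤ c) (M₁ : Matrix m n ℝ) (M₂ : Matrix m l ℝ) (M₃ : Matrix k n ℝ) :
    (∃ W : Matrix k l ℝ, (fromBlocks M₁ M₂ M₃ W)ᵀ * fromBlocks M₁ M₂ M₃ W ≤ c • 1) ↔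
      (fromCols M₁ M₂)ᵀ * fromCols M₁ M₂ ≤ c • 1 ∧
        (fromRows M₁ M₃)ᵀ * fromRows M₁ M₃ ≤ c • 1 := by
  constructor
  · rintro ⟨W, hW⟩
    exact ⟨transpose_mul_self_le_of_fromRows (by rwa [fromRows_fromCols_eq_fromBlocks]),
      transpose_mul_self_le_of_fromCols hc (by rwa [fromCols_fromRows_eq_fromBlocks])⟩
  · rintro ⟨hrow, hcol⟩
    obtain ⟨Z, hZ, rfl⟩ := exists_eq_mul_defect_of_fromRows hcol
    obtain ⟨Y, hY, rfl⟩ := exists_eq_defect_mul_of_fromCols hc hrow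
    exact ⟨_, transpose_mul_self_fromBlocks_defect_le hc
      (transpose_mul_self_le_of_fromRows hcol) hZ hY⟩

theorem exists_symmetric_completion [DecidableEq k] [DecidableEq n] (hc : 0 ≤ c)
    {A : Matrix n n ℝ} {C : Matrix k n ℝ} (hA : Aᵀ = A)
    (hcol : (fromRows A C)ᵀ * fromRows A C ≤ c • 1) :
    ∃ W : Matrix k k ℝ, Wᵀ = W ∧ (fromBlocks A Cᵀ C W)ᵀ * fromBlocks A Cᵀ C W ≤ c • 1 := by
  obtain ⟨Z, hZ, rfl⟩ := exists_eq_mul_defect_of_fromRows hcol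
  have hB : (Z * defect c A)ᵀ = defect c Aᵀ * Zᵀ := by rw [transpose_mul, transpose_defect, hA]
  refine ⟨-(Z * Aᵀ * Zᵀ), by simp [hA, Matrix.mul_assoc], ?_⟩
  rw [hB]
  exact transpose_mul_self_fromBlocks_defect_le hc (transpose_mul_self_le_of_fromRows hcol) hZ
    (by simpa using mul_transpose_le_one hZ)

theorem exists_skew_completion [DecidableEq k] [DecidableEq n] (hc : 0 ≤ c)
    {A : Matrix n n ℝ} {C : Matrix k n ℝ} (hA : Aᵀ = -A)
    (hcol : (fromRows A C)ᵀ * fromRows A C ≤ c • 1) :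
    ∃ W : Matrix k k ℝ, Wᵀ = -W ∧
      (fromBlocks A (-Cᵀ) C W)ᵀ * fromBlocks A (-Cᵀ) C W ≤ c • 1 := by
  obtain ⟨Z, hZ, rfl⟩ := exists_eq_mul_defect_of_fromRows hcol
  have hB : -(Z * defect c A)ᵀ = defect c Aᵀ * -Zᵀ := by
    rw [transpose_mul, transpose_defect, hA, defect_neg, Matrix.mul_neg]
  refine ⟨-(Z * Aᵀ * -Zᵀ), by simp [hA, Matrix.mul_assoc], ?_⟩
  rw [hB]
  exact transpose_mul_self_fromBlocks_defect_le hc (transpose_mul_self_le_of_fromRows hcol) hZ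
    (by simpa using mul_transpose_le_one hZ)

end Completion

end Matrix

theorem norm_bounded_completion_general
    (p q r s : ℕ) (L : ℝ)
    (M₁ : Matrix (Fin p) (Fin q) ℝ) (M₂ : Matrix (Fin p) (Fin r) ℝ)
    (M₃ : Matrix (Fin s) (Fin q) ℝ) :
    ((∃ W : Matrix (Fin s) (Fin r) ℝ,
        (L ^ 2 • (1 : Matrix (Fin q ⊕ Fin r) (Fin q ⊕ Fin r) ℝ) -
          (Matrix.fromBlocks M₁ M₂ M₃ W)ᵀ * Matrix.fromBlocks M₁ M₂ M₃ W).PosSemidef) ↔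
      ((L ^ 2 • (1 : Matrix (Fin q ⊕ Fin r) (Fin q ⊕ Fin r) ℝ) -
          (Matrix.fromCols M₁ M₂)ᵀ * Matrix.fromCols M₁ M₂).PosSemidef ∧
        (L ^ 2 • (1 : Matrix (Fin q) (Fin q) ℝ) -
          (Matrix.fromRows M₁ M₃)ᵀ * Matrix.fromRows M₁ M₃).PosSemidef)) ∧
    (∀ (p' s' : ℕ) (A : Matrix (Fin p') (Fin p') ℝ) (B : Matrix (Fin p') (Fin s') ℝ)
        (C : Matrix (Fin s') (Fin p') ℝ), Aᵀ = A → B = Cᵀ →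
      (L ^ 2 • (1 : Matrix (Fin p' ⊕ Fin s') (Fin p' ⊕ Fin s') ℝ) -
          (Matrix.fromCols A B)ᵀ * Matrix.fromCols A B).PosSemidef →
      (L ^ 2 • (1 : Matrix (Fin p') (Fin p') ℝ) -
          (Matrix.fromRows A C)ᵀ * Matrix.fromRows A C).PosSemidef →
      ∃ W : Matrix (Fin s') (Fin s') ℝ, Wᵀ = W ∧
        (L ^ 2 • (1 : Matrix (Fin p' ⊕ Fin s') (Fin p' ⊕ Fin s') ℝ) -
          (Matrix.fromBlocks A B C W)ᵀ * Matrix.fromBlocks A B C W).PosSemidef) ∧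
    (∀ (p' s' : ℕ) (A : Matrix (Fin p') (Fin p') ℝ) (B : Matrix (Fin p') (Fin s') ℝ)
        (C : Matrix (Fin s') (Fin p') ℝ), Aᵀ = -A → B = -Cᵀ →
      (L ^ 2 • (1 : Matrix (Fin p' ⊕ Fin s') (Fin p' ⊕ Fin s') ℝ) -
          (Matrix.fromCols A B)ᵀ * Matrix.fromCols A B).PosSemidef →
      (L ^ 2 • (1 : Matrix (Fin p') (Fin p') ℝ) -
          (Matrix.fromRows A C)ᵀ * Matrix.fromRows A C).PosSemidef →
      ∃ W : Matrix (Fin s') (Fin s') ℝ, Wᵀ = -W ∧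
        (L ^ 2 • (1 : Matrix (Fin p' ⊕ Fin s') (Fin p' ⊕ Fin s') ℝ) -
          (Matrix.fromBlocks A B C W)ᵀ * Matrix.fromBlocks A B C W).PosSemidef) := by
  have hc : 0 ≤ L ^ 2 := sq_nonneg L
  refine ⟨exists_completion_iff hc M₁ M₂ M₃, ?_, ?_⟩
  · rintro p' s' A B C hA rfl - hcol
    exact exists_symmetric_completion hc hA hcol
  · rintro p' s' A B C hA rfl - hcol
    exact exists_skew_completion hc hA hcol

/-- Norm-bounded matrix completion (Theorem 3.10, Davis–Kahan–Weinberger): a block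
matrix `[[M₁, M₂],[M₃, W]]` with `σ_max ≤ L` (encoded as `AᵀA ⪯ L²·I`) exists if and
only if `σ_max([M₁ M₂]) ≤ L` and `σ_max([M₁; M₃]) ≤ L`. Moreover, in the square case,
if `M₁` is symmetric and `M₂ = M₃ᵀ` then `W` can be chosen symmetric, and if `M₁` is
skew-symmetric and `M₂ = −M₃ᵀ` then `W` can be chosen skew-symmetric. -/
theorem norm_bounded_completion
    (p q r s : ℕ) (L : ℝ) (hL : 0 ≤ L)
    (M₁ : Matrix (Fin p) (Fin q) ℝ) (M₂ : Matrix (Fin p) (Fin r) ℝ)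
    (M₃ : Matrix (Fin s) (Fin q) ℝ) :
    ((∃ W : Matrix (Fin s) (Fin r) ℝ,
        (L ^ 2 • (1 : Matrix (Fin q ⊕ Fin r) (Fin q ⊕ Fin r) ℝ) -
          (Matrix.fromBlocks M₁ M₂ M₃ W)ᵀ * Matrix.fromBlocks M₁ M₂ M₃ W).PosSemidef) ↔
      ((L ^ 2 • (1 : Matrix (Fin q ⊕ Fin r) (Fin q ⊕ Fin r) ℝ) -
          (Matrix.fromCols M₁ M₂)ᵀ * Matrix.fromCols M₁ M₂).PosSemidef ∧
        (L ^ 2 • (1 : Matrix (Fin q) (Fin q) ℝ) -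
          (Matrix.fromRows M₁ M₃)ᵀ * Matrix.fromRows M₁ M₃).PosSemidef)) ∧
    (∀ (p' s' : ℕ) (A : Matrix (Fin p') (Fin p') ℝ) (B : Matrix (Fin p') (Fin s') ℝ)
        (C : Matrix (Fin s') (Fin p') ℝ), Aᵀ = A → B = Cᵀ →
      (L ^ 2 • (1 : Matrix (Fin p' ⊕ Fin s') (Fin p' ⊕ Fin s') ℝ) -
          (Matrix.fromCols A B)ᵀ * Matrix.fromCols A B).PosSemidef →
      (L ^ 2 • (1 : Matrix (Fin p') (Fin p') ℝ) -
          (Matrix.fromRows A C)ᵀ * Matrix.fromRows A C).PosSemidef →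
      ∃ W : Matrix (Fin s') (Fin s') ℝ, Wᵀ = W ∧
        (L ^ 2 • (1 : Matrix (Fin p' ⊕ Fin s') (Fin p' ⊕ Fin s') ℝ) -
          (Matrix.fromBlocks A B C W)ᵀ * Matrix.fromBlocks A B C W).PosSemidef) ∧
    (∀ (p' s' : ℕ) (A : Matrix (Fin p') (Fin p') ℝ) (B : Matrix (Fin p') (Fin s') ℝ)
        (C : Matrix (Fin s') (Fin p') ℝ), Aᵀ = -A → B = -Cᵀ →
      (L ^ 2 • (1 : Matrix (Fin p' ⊕ Fin s') (Fin p' ⊕ Fin s') ℝ) -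
          (Matrix.fromCols A B)ᵀ * Matrix.fromCols A B).PosSemidef →
      (L ^ 2 • (1 : Matrix (Fin p') (Fin p') ℝ) -
          (Matrix.fromRows A C)ᵀ * Matrix.fromRows A C).PosSemidef →
      ∃ W : Matrix (Fin s') (Fin s') ℝ, Wᵀ = -W ∧
        (L ^ 2 • (1 : Matrix (Fin p' ⊕ Fin s') (Fin p' ⊕ Fin s') ℝ) -
          (Matrix.fromBlocks A B C W)ᵀ * Matrix.fromBlocks A B C W).PosSemidef) :=
  norm_bounded_completion_general p q r s L M₁ M₂ M₃
end
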